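/- arXiv:1802.04789 — 3 statements merged into one kernel-verified Lean document; each statement's English description precedes it below -/
import Mathlib

section
/- Let a_1 ≤ a_2 ≤ ... ≤ a_n be a sorted finite sequence of natural numbers, let x ∈ ℕ satisfy a_i ≤ x for all i, and let k divide n. Then there is a partition of the index set [n] into k sets A_1, ..., A_k, each of size n/k, such that for every j, the sum of a_i over i ∈ A_j is at most (∑_{i=1}^n a_i)/k + x. -/
/-!
Take `A_j = {j + k ℓ : ℓ < n / k}`. As `a` is sorted and `j < k`, the term `a (j + k ℓ)` is
at most each of the `k` terms of the next block `[k (ℓ + 1), k (ℓ + 2))`, so `k` times the sum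
of all but the last element of `A_j` is at most `∑ a`; the last element adds at most `k x`.
-/

open Finset

section StrideSums

variable {M : Type*} [AddCommMonoid M] [PartialOrder M] [IsOrderedAddMonoid M]
  {b : ℕ → M} {j k : ℕ}

theorem nsmul_sum_stride_le_sum_Ico (hb : Monotone b) (hj : j ≤ k) (m : ℕ) :
    k • ∑ ℓ ∈ range m, b (j + k * ℓ) ≤ ∑ t ∈ Ico k (k * (m + 1)), b t := by
  induction m with
  | zero => simp
  | succ m ih =>
    have hblock : k • b (j + k * m) ≤ ∑ t ∈ Ico (k * (m + 1)) (k * (m + 1 + 1)), b t := by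
      have hcard : #(Ico (k * (m + 1)) (k * (m + 1 + 1))) = k := by
        rw [Nat.card_Ico]; ring_nf; omega
      have := card_nsmul_le_sum (Ico (k * (m + 1)) (k * (m + 1 + 1))) b (b (j + k * m))
        fun t ht ↦ hb <| by rw [mem_Ico] at ht; nlinarith
      rwa [hcard] at this
    rw [sum_range_succ, smul_add, ← sum_Ico_consecutive b (show k ≤ k * (m + 1) by nlinarith)
      (show k * (m + 1) ≤ k * (m + 1 + 1) by nlinarith)]
    exact add_le_add ih hblock

theorem nsmul_sum_stride_le [CanonicallyOrderedAdd M] (hb : Monotone b) {x : M}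
    (hx : ∀ t, b t ≤ x) (hj : j ≤ k) (m : ℕ) :
    k • ∑ ℓ ∈ range m, b (j + k * ℓ) ≤ ∑ t ∈ range (k * m), b t + k • x := by
  cases m with
  | zero => simp
  | succ m =>
    rw [sum_range_succ, smul_add]
    gcongr
    · calc k • ∑ ℓ ∈ range m, b (j + k * ℓ) ≤ ∑ t ∈ Ico k (k * (m + 1)), b t :=
            nsmul_sum_stride_le_sum_Ico hb hj m
        _ ≤ ∑ t ∈ range (k * (m + 1)), b t :=
            sum_le_sum_of_subset fun t ht ↦ mem_range.2 (mem_Ico.1 ht).2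
    · exact hx _

end StrideSums

theorem Monotone.dite_fin_lt {α : Type*} [Preorder α] {n : ℕ} {a : Fin n → α}
    (ha : Monotone a) {x : α} (hx : ∀ i, a i ≤ x) :
    Monotone fun t : ℕ ↦ if h : t < n then a ⟨t, h⟩ else x := by
  intro s t hst
  by_cases ht : t < n
  · simp only [ht, lt_of_le_of_lt hst ht, dite_true]
    exact ha hst
  · by_cases hs : s < n <;> simp [hs, ht, hx]

theorem Fin.map_valEmbedding_filter_mod_eq {k m j : ℕ} (hj : j < k) :
    (univ.filter fun i : Fin (k * m) ↦ (i : ℕ) % k = j).map Fin.valEmbedding =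
      (range m).map ⟨(j + k * ·), (add_right_injective j).comp
        (mul_right_injective₀ (by omega))⟩ := by
  ext t
  simp only [mem_map, mem_filter, mem_univ, true_and, Fin.valEmbedding_apply, mem_range,
    Function.Embedding.coeFn_mk]
  constructor
  · rintro ⟨i, rfl, rfl⟩
    exact ⟨i / k, Nat.div_lt_of_lt_mul i.2, Nat.mod_add_div i k⟩
  · rintro ⟨ℓ, hℓ, rfl⟩
    exact ⟨⟨j + k * ℓ, by nlinarith⟩,
      by simp [Nat.add_mul_mod_self_left, Nat.mod_eq_of_lt hj], rfl⟩

/-- Given a sorted sequence `a : Fin n → ℕ` with all values at most `x`, and `k`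
dividing `n`, there is a partition of the index set `Fin n` into `k` classes
(fibers of `f`), each of size `n/k`, such that each class's sum is at most
`(∑ a)/k + x` (stated multiplied through by `k`). -/
theorem stmt2 (n k x : ℕ) (hk : 0 < k) (hkn : k ∣ n)
    (a : Fin n → ℕ) (hsorted : Monotone a) (hx : ∀ i, a i ≤ x) :
    ∃ f : Fin n → Fin k,
      (∀ j : Fin k, (Finset.univ.filter (fun i => f i = j)).card = n / k) ∧
      (∀ j : Fin k,
        k * ∑ i ∈ Finset.univ.filter (fun i => f i = j), a i ≤ (∑ i, a i) + k * x) := by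
  obtain ⟨m, rfl⟩ := hkn
  set b : ℕ → ℕ := fun t ↦ if h : t < k * m then a ⟨t, h⟩ else x
  have hab (i : Fin (k * m)) : b i = a i := dif_pos i.2
  have hfiber (j : Fin k) := Fin.map_valEmbedding_filter_mod_eq (m := m) j.2
  refine ⟨fun i ↦ ⟨i % k, Nat.mod_lt _ hk⟩, fun j ↦ ?_, fun j ↦ ?_⟩ <;> simp only [Fin.ext_iff]
  · rw [← card_map Fin.valEmbedding, hfiber, card_map, card_range, Nat.mul_div_cancel_left m hk]
  · have hstride : ∑ i ∈ univ.filter (fun i : Fin (k * m) ↦ (i : ℕ) % k = j), a i =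
        ∑ ℓ ∈ range m, b (j + k * ℓ) := by
      rw [← sum_congr rfl fun i _ ↦ hab i]
      exact (sum_map _ Fin.valEmbedding b).symm.trans (by rw [hfiber, sum_map]; rfl)
    have htotal : ∑ i, a i = ∑ t ∈ range (k * m), b t := by
      simp_rw [← hab]
      exact Fin.sum_univ_eq_sum_range b _
    rw [hstride, htotal]
    exact nsmul_sum_stride_le (hsorted.dite_fin_lt hx) (fun t ↦ by split <;> simp [hx]) j.2.le m
end

section
/- Let S be an n×n matrix and suppose its rows are reordered (via a permutation σ obtained from the strided-partition claim applied to the sorted multiset of row nonzero-counts with bound x = n) so that the resulting matrix S' satisfies: for every i ∈ [a], the band S'_i consisting of rows (i−1)(n/a)+1 through i(n/a) has nz(S'_i) ≤ nz(S')/a + n. Formally: for any sequence of nonnegative integers r_1,...,r_n with r_v ≤ n for all v (the row nonzero counts) and any a dividing n, there exists a permutation σ of [n] such that for every i ∈ [a], ∑_{v=(i−1)(n/a)+1}^{i(n/a)} r_{σ(v)} ≤ (∑_{v=1}^n r_v)/a + n. -/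
/-!
Sort the values increasingly, `t 0 ≤ t 1 ≤ ⋯`, and let block `i` receive the strided class
`t i, t (i + a), t (i + 2a), …`. Each member `t (i + a k)` of the class is at most every value
of the next window `t (a(k+1)), …, t (a(k+2) - 1)`, so `a` times the block sum is at most the
sum over all values shifted by one window, which exceeds the total by at most `a` values,
each `≤ n`.
-/

open Finset

theorem Monotone.dite_lt_const {α : Type*} [Preorder α] {n : ℕ} {f : Fin n → α}
    (hf : Monotone f) {c : α} (hc : ∀ v, f v ≤ c) :
    Monotone fun j => if h : j < n then f ⟨j, h⟩ else c := by
  intro x y hxy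
  by_cases hy : y < n
  · simp only [dif_pos hy, dif_pos (hxy.trans_lt hy)]
    exact hf (Fin.mk_le_mk.mpr hxy)
  · simp only [dif_neg hy]
    split
    · exact hc _
    · exact le_rfl

theorem mul_sum_range_stride_le {t : ℕ → ℕ} (ht : Monotone t) {a i : ℕ} (hi : i < a)
    (m : ℕ) :
    a * ∑ k ∈ range m, t (i + a * k) ≤ ∑ j ∈ range (a * m), t (a + j) := by
  induction m with
  | zero => simp
  | succ m ih =>
    have hlast : a * t (i + a * m) ≤ ∑ l ∈ range a, t (a + (a * m + l)) :=
      calc a * t (i + a * m) = ∑ _l ∈ range a, t (i + a * m) := by simp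
        _ ≤ ∑ l ∈ range a, t (a + (a * m + l)) := sum_le_sum fun l _ => ht (by omega)
    rw [sum_range_succ, mul_add, Nat.mul_succ, sum_range_add]
    omega

theorem sum_range_shift_le {t : ℕ → ℕ} {c : ℕ} (htc : ∀ j, t j ≤ c) (n a : ℕ) :
    ∑ j ∈ range n, t (a + j) ≤ ∑ j ∈ range n, t j + a * c := by
  have htail : ∑ j ∈ range a, t (n + j) ≤ a * c := by
    simpa using sum_le_sum fun j (_ : j ∈ range a) => htc (n + j)
  have hsplit := sum_range_add t a n
  rw [Nat.add_comm, sum_range_add] at hsplit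
  omega

theorem Fin.sum_filter_le_val_lt {M : Type*} [AddCommMonoid M] (f : ℕ → M) {n lo hi : ℕ}
    (h : hi ≤ n) :
    ∑ v ∈ univ.filter (fun v : Fin n => lo ≤ (v : ℕ) ∧ (v : ℕ) < hi), f v =
      ∑ j ∈ Ico lo hi, f j := by
  rw [sum_filter, Fin.sum_univ_eq_sum_range (fun j => if lo ≤ j ∧ j < hi then f j else 0),
    ← sum_filter]
  congr 1
  ext j
  simp only [mem_filter, mem_range, mem_Ico]
  omega

def finTranspose (a m : ℕ) : Equiv.Perm (Fin (a * m)) :=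
  finProdFinEquiv.symm.trans
    ((Equiv.prodComm _ _).trans (finProdFinEquiv.trans (finCongr (mul_comm m a))))

theorem finTranspose_apply_val {a m : ℕ} (v : Fin (a * m)) :
    (finTranspose a m v : ℕ) = v / m + a * (v % m) := by
  simp [finTranspose, finProdFinEquiv]

theorem sum_filter_block_finTranspose {M : Type*} [AddCommMonoid M] (f : ℕ → M)
    {a m i : ℕ} (hi : i < a) :
    ∑ v ∈ univ.filter (fun v : Fin (a * m) => i * m ≤ (v : ℕ) ∧ (v : ℕ) < (i + 1) * m),
      f (finTranspose a m v) = ∑ k ∈ range m, f (i + a * k) := by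
  simp only [finTranspose_apply_val]
  rw [Fin.sum_filter_le_val_lt (fun j => f (j / m + a * (j % m)))
      (Nat.mul_le_mul_right m (Nat.succ_le_of_lt hi)),
    sum_Ico_eq_sum_range, Nat.succ_mul, Nat.add_sub_cancel_left]
  refine sum_congr rfl fun k hk => ?_
  have hk : k < m := mem_range.mp hk
  rw [Nat.div_eq_of_lt_le (k := i) (by omega) (by rw [Nat.succ_mul]; omega),
    Nat.mul_comm i m, Nat.mul_add_mod, Nat.mod_eq_of_lt hk]

theorem stmt14_general (n a : ℕ) (han : a ∣ n)
    (r : Fin n → ℕ) (hr : ∀ v, r v ≤ n) :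
    ∃ σ : Equiv.Perm (Fin n),
      ∀ i : ℕ, i < a →
        a * ∑ v ∈ Finset.univ.filter
            (fun v : Fin n => i * (n / a) ≤ (v : ℕ) ∧ (v : ℕ) < (i + 1) * (n / a)),
          r (σ v) ≤ (∑ v, r v) + a * n := by
  obtain ⟨m, rfl⟩ := han
  set π := Tuple.sort r
  -- padding the sorted values with `a * m` keeps them monotone and bounded past the end
  set t : ℕ → ℕ := fun j => if h : j < a * m then r (π ⟨j, h⟩) else a * m with ht
  have ht_mono : Monotone t := (Tuple.monotone_sort r).dite_lt_const fun v => hr (π v)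
  have ht_le : ∀ j, t j ≤ a * m := fun j => by
    simp only [ht]
    split
    · exact hr _
    · exact le_rfl
  have ht_fin : ∀ v, r (π v) = t v := fun v => by simp [ht]
  have ht_sum : ∑ j ∈ range (a * m), t j = ∑ v, r v := by
    rw [← Fin.sum_univ_eq_sum_range, ← Equiv.sum_comp π r]
    exact sum_congr rfl fun v _ => (ht_fin v).symm
  refine ⟨π * finTranspose a m, fun i hi => ?_⟩
  simp only [Nat.mul_div_cancel_left m (Nat.zero_lt_of_lt hi), Equiv.Perm.mul_apply, ht_fin]
  rw [sum_filter_block_finTranspose t hi]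
  calc a * ∑ k ∈ range m, t (i + a * k) ≤ ∑ j ∈ range (a * m), t (a + j) :=
        mul_sum_range_stride_le ht_mono hi m
    _ ≤ ∑ j ∈ range (a * m), t j + a * (a * m) := sum_range_shift_le ht_le _ _
    _ = ∑ v, r v + a * (a * m) := by rw [ht_sum]

/-- Row balancing: for any row nonzero-counts `r : Fin n → ℕ` with `r v ≤ n` for
all `v`, and any `a` dividing `n`, there is a permutation `σ` of `[n]` such that
every consecutive block of `n/a` reordered values sums to at most
`(∑ r)/a + n` (stated multiplied through by `a`). -/
theorem stmt14 (n a : ℕ) (ha : 0 < a) (han : a ∣ n)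
    (r : Fin n → ℕ) (hr : ∀ v, r v ≤ n) :
    ∃ σ : Equiv.Perm (Fin n),
      ∀ i : ℕ, i < a →
        a * ∑ v ∈ Finset.univ.filter
            (fun v : Fin n => i * (n / a) ≤ (v : ℕ) ∧ (v : ℕ) < (i + 1) * (n / a)),
          r (σ v) ≤ (∑ v, r v) + a * n :=
  stmt14_general n a han r hr
end

section
/- Let S, T be n×n matrices that are sparsity-balanced with respect to an n-split pair (a,b), fix (i,j) ∈ [a]×[b], and for ℓ ∈ [n] define the page weight w_ℓ = nz(S_i[*][ℓ]) + nz(T_j[ℓ][*]) (nonzeros in column ℓ of the row-band S_i plus nonzeros in row ℓ of the column-band T_j). Then each w_ℓ ≤ 2n, hence (by the strided-partition claim with x = 2n and k = n/(ab)) there exists a partition of [n] into n/(ab) sets A_1, ..., A_{n/(ab)} of equal size ab such that for every k, ∑_{ℓ ∈ A_k} w_ℓ ≤ (ab/n)·∑_{ℓ∈[n]} w_ℓ + 2n. -/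
/-!
Sort the weights and deal the sorted positions out to the `K = n/(ab)` classes in turn, position
`c + K t` going to class `c`. The `t`-th element of one class is at most the `(t+1)`-st element of
any other, so two class sums differ by at most one weight, hence by at most `2n`; summing over the
`K` classes gives `K · (class sum) ≤ (total weight) + 2nK`, and multiplying by `ab` gives the bound.
-/

open Finset

lemma finProdFinEquiv_castSucc_le_succ {m K : ℕ} (t : Fin m) (c c' : Fin K) :
    finProdFinEquiv (t.castSucc, c) ≤ finProdFinEquiv (t.succ, c') := by
  rw [Fin.le_def]
  simp only [finProdFinEquiv_apply_val, Fin.val_castSucc, Fin.val_succ, mul_add]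
  omega

lemma sum_filter_snd_symm_eq {α β γ M : Type*} [Fintype α] [Fintype β] [Fintype γ]
    [DecidableEq β] [AddCommMonoid M] (e : α × β ≃ γ) (g : γ → M) (k : β) :
    ∑ ℓ ∈ univ.filter (fun ℓ => (e.symm ℓ).2 = k), g ℓ = ∑ t, g (e (t, k)) := by
  rw [sum_filter, ← e.sum_comp, Fintype.sum_prod_type]
  simp

section StridedPartition

variable {M : Type*} [AddCommMonoid M] [LinearOrder M] [IsOrderedAddMonoid M]
  [CanonicallyOrderedAdd M]

lemma sum_stride_le_add_sum_stride {m K : ℕ} {g : Fin (m * K) → M} (hg : Monotone g)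
    {x : M} (hx : ∀ p, g p ≤ x) (c c' : Fin K) :
    ∑ t, g (finProdFinEquiv (t, c)) ≤ x + ∑ t, g (finProdFinEquiv (t, c')) := by
  cases m with
  | zero => simp
  | succ m =>
    rw [Fin.sum_univ_castSucc, Fin.sum_univ_succ, add_comm]
    gcongr ?_ + ?_
    · exact hx _
    · calc ∑ t : Fin m, g (finProdFinEquiv (t.castSucc, c))
          ≤ ∑ t : Fin m, g (finProdFinEquiv (t.succ, c')) :=
            sum_le_sum fun t _ => hg (finProdFinEquiv_castSucc_le_succ t c c')
        _ ≤ _ := le_add_self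

theorem exists_equipartition_sum_le {m K n : ℕ} (hn : m * K = n) (w : Fin n → M) {x : M}
    (hx : ∀ ℓ, w ℓ ≤ x) :
    ∃ f : Fin n → Fin K,
      (∀ k, (univ.filter (fun ℓ => f ℓ = k)).card = m) ∧
      ∀ k, K • ∑ ℓ ∈ univ.filter (fun ℓ => f ℓ = k), w ℓ ≤ ∑ ℓ, w ℓ + K • x := by
  subst hn
  set e := finProdFinEquiv.trans (Tuple.sort w)
  have hfiber : ∀ k, ∑ ℓ ∈ univ.filter (fun ℓ => (e.symm ℓ).2 = k), w ℓ
      = ∑ t, (w ∘ Tuple.sort w) (finProdFinEquiv (t, k)) :=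
    sum_filter_snd_symm_eq e w
  have htotal : ∑ k, ∑ t, (w ∘ Tuple.sort w) (finProdFinEquiv (t, k)) = ∑ ℓ, w ℓ := by
    rw [sum_comm, ← Fintype.sum_prod_type']
    exact e.sum_comp w
  refine ⟨fun ℓ => (e.symm ℓ).2, fun k => ?_, fun k => ?_⟩
  · rw [card_eq_sum_ones, sum_filter_snd_symm_eq e (fun _ => 1) k, sum_const, card_univ,
      Fintype.card_fin, smul_eq_mul, mul_one]
  · calc K • ∑ ℓ ∈ univ.filter (fun ℓ => (e.symm ℓ).2 = k), w ℓ
        = ∑ _k' : Fin K, ∑ t, (w ∘ Tuple.sort w) (finProdFinEquiv (t, k)) := by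
          rw [hfiber, sum_const, card_univ, Fintype.card_fin]
      _ ≤ ∑ k', (x + ∑ t, (w ∘ Tuple.sort w) (finProdFinEquiv (t, k'))) :=
          sum_le_sum fun k' _ =>
            sum_stride_le_add_sum_stride (Tuple.monotone_sort w) (fun _ => hx _) k k'
      _ = ∑ ℓ, w ℓ + K • x := by
          rw [sum_add_distrib, htotal, sum_const, card_univ, Fintype.card_fin, add_comm]

end StridedPartition

theorem stmt16_general {n a b : ℕ} {R : Type*} [Zero R] [DecidableEq R]
    (S T : Matrix (Fin n) (Fin n) R)
    (hab : a * b ∣ n)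
    (i j : ℕ)
    (w : Fin n → ℕ)
    (hw : ∀ ℓ : Fin n,
      w ℓ = (Finset.univ.filter (fun u : Fin n =>
              i * (n / a) ≤ (u : ℕ) ∧ (u : ℕ) < (i + 1) * (n / a) ∧ S u ℓ ≠ 0)).card
          + (Finset.univ.filter (fun v : Fin n =>
              j * (n / b) ≤ (v : ℕ) ∧ (v : ℕ) < (j + 1) * (n / b) ∧ T ℓ v ≠ 0)).card) :
    (∀ ℓ : Fin n, w ℓ ≤ 2 * n) ∧
    ∃ f : Fin n → Fin (n / (a * b)),
      (∀ k : Fin (n / (a * b)),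
        (Finset.univ.filter (fun ℓ => f ℓ = k)).card = a * b) ∧
      (∀ k : Fin (n / (a * b)),
        n * ∑ ℓ ∈ Finset.univ.filter (fun ℓ => f ℓ = k), w ℓ ≤
          a * b * (∑ ℓ, w ℓ) + 2 * n * n) := by
  have hwle : ∀ ℓ, w ℓ ≤ 2 * n := fun ℓ => by
    rw [hw ℓ, two_mul]
    exact add_le_add ((card_filter_le _ _).trans_eq (card_fin n))
      ((card_filter_le _ _).trans_eq (card_fin n))
  have hn : a * b * (n / (a * b)) = n := Nat.mul_div_cancel' hab
  obtain ⟨f, hcard, hsum⟩ := exists_equipartition_sum_le hn w hwle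
  refine ⟨hwle, f, hcard, fun k => ?_⟩
  calc n * ∑ ℓ ∈ univ.filter (fun ℓ => f ℓ = k), w ℓ
      = a * b * ((n / (a * b)) • ∑ ℓ ∈ univ.filter (fun ℓ => f ℓ = k), w ℓ) := by
        rw [smul_eq_mul, ← mul_assoc, hn]
    _ ≤ a * b * (∑ ℓ, w ℓ + (n / (a * b)) • (2 * n)) := Nat.mul_le_mul_left _ (hsum k)
    _ = a * b * (∑ ℓ, w ℓ) + 2 * n * n := by
        rw [smul_eq_mul, mul_add, ← mul_assoc, hn, mul_comm n]

/-- Page-weight balancing: for matrices `S, T` that are sparsity-balanced w.r.t. an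
`n`-split pair `(a,b)` and a fixed `(i,j) ∈ [a]×[b]`, the page weights
`w_ℓ = nz(S_i[*][ℓ]) + nz(T_j[ℓ][*])` all satisfy `w_ℓ ≤ 2n`, and there is a
partition of `[n]` into `n/(ab)` classes of equal size `ab` (fibers of `f`) with
`∑_{ℓ ∈ A_k} w_ℓ ≤ (ab/n)·∑_ℓ w_ℓ + 2n` for every class (stated multiplied
through by `n`). -/
theorem stmt16 {n a b : ℕ} {R : Type*} [Zero R] [DecidableEq R]
    (S T : Matrix (Fin n) (Fin n) R)
    (ha1 : 1 ≤ a) (hb1 : 1 ≤ b) (hadvd : a ∣ n) (hbdvd : b ∣ n)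
    (hab : a * b ∣ n) (hsplit : 1 ≤ n / (a * b))
    (i j : ℕ) (hi : i < a) (hj : j < b)
    (w : Fin n → ℕ)
    (hw : ∀ ℓ : Fin n,
      w ℓ = (Finset.univ.filter (fun u : Fin n =>
              i * (n / a) ≤ (u : ℕ) ∧ (u : ℕ) < (i + 1) * (n / a) ∧ S u ℓ ≠ 0)).card
          + (Finset.univ.filter (fun v : Fin n =>
              j * (n / b) ≤ (v : ℕ) ∧ (v : ℕ) < (j + 1) * (n / b) ∧ T ℓ v ≠ 0)).card) :
    (∀ ℓ : Fin n, w ℓ ≤ 2 * n) ∧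
    ∃ f : Fin n → Fin (n / (a * b)),
      (∀ k : Fin (n / (a * b)),
        (Finset.univ.filter (fun ℓ => f ℓ = k)).card = a * b) ∧
      (∀ k : Fin (n / (a * b)),
        n * ∑ ℓ ∈ Finset.univ.filter (fun ℓ => f ℓ = k), w ℓ ≤
          a * b * (∑ ℓ, w ℓ) + 2 * n * n) :=
  stmt16_general S T hab i j w hw
end
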